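/- arXiv:2403.01486 — 2 statements merged into one kernel-verified Lean document; each statement's English description precedes it below -/
import Mathlib

section
/- Let J be a finite index set, x₀ ∈ EuclideanSpace ℝ d, K ∈ ℕ, δ > 0, and G₀, G₁, G₂, B₀, B₁, B₂ ≥ 0. Let wⱼ, eⱼ : EuclideanSpace ℝ d → ℝ (j ∈ J) be C² on a neighborhood of x₀. Assume that for all but at most K indices j ∈ J, wⱼ vanishes identically on a neighborhood of x₀, and that for every j ∈ J: |wⱼ(x₀)| ≤ G₀, ‖gradient wⱼ x₀‖ ≤ G₁/δ, |Δwⱼ(x₀)| ≤ G₂/δ², and whenever wⱼ does not vanish on a neighborhood of x₀ also |eⱼ(x₀)| ≤ B₀, ‖gradient eⱼ x₀‖ ≤ B₁, |Δeⱼ(x₀)| ≤ B₂. Then |Δ(∑_{j∈J} wⱼ eⱼ)(x₀)| ≤ K (G₂ δ⁻² B₀ + 2 G₁ δ⁻¹ B₁ + G₀ B₂). (This is the consistency estimate (theorconv) for the Laplacian of the RBF-PUM approximation error, using the weight derivative bounds ‖D^β w‖_∞ ≤ G_{|β|} δ^{−|β|} of equation (west).) -/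
/-!
By the Leibniz rule `Δ(w e) = (Δw) e + 2⟪∇w, ∇e⟫ + w Δe`, each summand `Δ(wⱼ eⱼ)(x₀)` is bounded
by `G₂ δ⁻² B₀ + 2 G₁ δ⁻¹ B₁ + G₀ B₂` (Cauchy–Schwarz on the middle term), while a summand whose
weight vanishes near `x₀` has zero Laplacian there; at most `K` summands remain.
-/

open Finset Filter
open scoped Classical Topology

/-- The Laplacian of `f` at `x`: sum of diagonal entries of the second Fréchet
derivative in the standard orthonormal basis of `EuclideanSpace ℝ (Fin d)`. -/
noncomputable def laplacian {d : ℕ} (f : EuclideanSpace ℝ (Fin d) → ℝ)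
    (x : EuclideanSpace ℝ (Fin d)) : ℝ :=
  ∑ i : Fin d, fderiv ℝ (fderiv ℝ f) x (EuclideanSpace.single i 1) (EuclideanSpace.single i 1)

open scoped Laplacian Gradient RealInnerProductSpace

section SecondDerivative

variable {𝕜 E : Type*} [NontriviallyNormedField 𝕜] [NormedAddCommGroup E] [NormedSpace 𝕜 E]
  {f g : E → 𝕜} {x : E}

theorem ContDiffAt.fderiv_fderiv_mul_apply (hf : ContDiffAt 𝕜 2 f x) (hg : ContDiffAt 𝕜 2 g x)
    (u v : E) :
    fderiv 𝕜 (fderiv 𝕜 fun y => f y * g y) x u v =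
      fderiv 𝕜 (fderiv 𝕜 f) x u v * g x + fderiv 𝕜 f x u * fderiv 𝕜 g x v +
        fderiv 𝕜 g x u * fderiv 𝕜 f x v + f x * fderiv 𝕜 (fderiv 𝕜 g) x u v := by
  have hf₁ : DifferentiableAt 𝕜 f x := hf.differentiableAt two_ne_zero
  have hg₁ : DifferentiableAt 𝕜 g x := hg.differentiableAt two_ne_zero
  have hf' : DifferentiableAt 𝕜 (fderiv 𝕜 f) x :=
    (hf.fderiv_right (m := 1) le_rfl).differentiableAt one_ne_zero
  have hg' : DifferentiableAt 𝕜 (fderiv 𝕜 g) x :=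
    (hg.fderiv_right (m := 1) le_rfl).differentiableAt one_ne_zero
  have hleibniz : (fderiv 𝕜 fun y => f y * g y) =ᶠ[𝓝 x]
      fun y => f y • fderiv 𝕜 g y + g y • fderiv 𝕜 f y := by
    filter_upwards [hf.eventually (by simp), hg.eventually (by simp)] with y hfy hgy
    exact fderiv_fun_mul (hfy.differentiableAt two_ne_zero) (hgy.differentiableAt two_ne_zero)
  rw [hleibniz.fderiv_eq, fderiv_fun_add (hf₁.fun_smul hg') (hg₁.fun_smul hf'),
    fderiv_fun_smul hf₁ hg', fderiv_fun_smul hg₁ hf']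
  simp only [add_apply, smul_apply, ContinuousLinearMap.smulRight_apply, smul_eq_mul]
  ring

end SecondDerivative

section Laplacian

variable {E : Type*} [NormedAddCommGroup E] [InnerProductSpace ℝ E] [FiniteDimensional ℝ E]
  {f g : E → ℝ} {x : E}

theorem laplacian_eq_sum_fderiv_fderiv {ι F : Type*} [Fintype ι] [NormedAddCommGroup F]
    [NormedSpace ℝ F] (v : OrthonormalBasis ι ℝ E) (f : E → F) (x : E) :
    Δ f x = ∑ i, fderiv ℝ (fderiv ℝ f) x (v i) (v i) := by
  simp [InnerProductSpace.laplacian_eq_iteratedFDeriv_orthonormalBasis f v, iteratedFDeriv_two_apply]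

theorem inner_gradient_eq_sum_fderiv_mul_fderiv {ι : Type*} [Fintype ι]
    (v : OrthonormalBasis ι ℝ E) (f g : E → ℝ) (x : E) :
    ⟪∇ f x, ∇ g x⟫ = ∑ i, fderiv ℝ f x (v i) * fderiv ℝ g x (v i) := by
  refine (v.sum_inner_mul_inner _ _).symm.trans (Finset.sum_congr rfl fun i _ => ?_)
  rw [inner_gradient_left, real_inner_comm, inner_gradient_left]

theorem ContDiffAt.laplacian_mul (hf : ContDiffAt ℝ 2 f x) (hg : ContDiffAt ℝ 2 g x) :
    Δ (fun y => f y * g y) x = Δ f x * g x + 2 * ⟪∇ f x, ∇ g x⟫ + f x * Δ g x := by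
  let v := stdOrthonormalBasis ℝ E
  simp only [laplacian_eq_sum_fderiv_fderiv v, inner_gradient_eq_sum_fderiv_mul_fderiv v,
    hf.fderiv_fderiv_mul_apply hg, Finset.sum_mul, Finset.mul_sum, ← Finset.sum_add_distrib]
  exact Finset.sum_congr rfl fun i _ => by ring

theorem abs_laplacian_mul_le (hf : ContDiffAt ℝ 2 f x) (hg : ContDiffAt ℝ 2 g x) :
    |Δ (fun y => f y * g y) x| ≤
      |Δ f x| * |g x| + 2 * (‖∇ f x‖ * ‖∇ g x‖) + |f x| * |Δ g x| := by
  rw [hf.laplacian_mul hg, ← abs_mul, ← abs_mul]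
  calc _ ≤ |Δ f x * g x| + |2 * ⟪∇ f x, ∇ g x⟫| + |f x * Δ g x| := abs_add_three _ _ _
    _ ≤ _ := by
      rw [abs_mul 2, abs_two]
      gcongr
      exact abs_real_inner_le_norm _ _

theorem ContDiffAt.laplacian_sum {ι F : Type*} [NormedAddCommGroup F] [NormedSpace ℝ F]
    {s : Finset ι} {f : ι → E → F}
    (hf : ∀ j ∈ s, ContDiffAt ℝ 2 (f j) x) :
    Δ (fun y => ∑ j ∈ s, f j y) x = ∑ j ∈ s, Δ (f j) x := by
  simp only [InnerProductSpace.laplacian_eq_iteratedFDeriv_stdOrthonormalBasis,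
    iteratedFDeriv_fun_sum_apply hf, _root_.sum_apply]
  exact Finset.sum_comm

theorem laplacian_eq_zero_of_eventuallyEq_zero {F : Type*} [NormedAddCommGroup F]
    [NormedSpace ℝ F] {f : E → F} (h : f =ᶠ[𝓝 x] 0) : Δ f x = 0 := by
  rw [(InnerProductSpace.laplacian_congr_nhds h).eq_of_nhds]
  exact congrFun InnerProductSpace.laplacian_const x

end Laplacian

theorem laplacian_eq_laplacian {d : ℕ} (f : EuclideanSpace ℝ (Fin d) → ℝ)
    (x : EuclideanSpace ℝ (Fin d)) : laplacian f x = Δ f x := by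
  simp [laplacian_eq_sum_fderiv_fderiv (EuclideanSpace.basisFun (Fin d) ℝ),
    EuclideanSpace.basisFun_apply, laplacian]

theorem abs_sum_le_card_filter_mul {ι : Type*} {J : Finset ι} {p : ι → Prop} [DecidablePred p]
    {a : ι → ℝ} {C : ℝ} (hzero : ∀ j ∈ J, ¬ p j → a j = 0) (hle : ∀ j ∈ J, p j → |a j| ≤ C) :
    |∑ j ∈ J, a j| ≤ #(J.filter p) * C := by
  rw [← Finset.sum_filter_of_ne fun j hj ha => by_contra fun hp => ha (hzero j hj hp)]
  refine (Finset.abs_sum_le_sum_abs _ _).trans ?_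
  simpa using Finset.sum_le_card_nsmul _ _ C fun j hj => (Finset.mem_filter.1 hj).elim (hle j)

/-- Consistency estimate for the Laplacian of the RBF-PUM error
`∑ⱼ wⱼ eⱼ`: with at most `K` weights not vanishing near `x₀`, weight-derivative
bounds `G₀, G₁/δ, G₂/δ²` and local error bounds `B₀, B₁, B₂`, one has
`|Δ(∑ⱼ wⱼ eⱼ)(x₀)| ≤ K (G₂ δ⁻² B₀ + 2 G₁ δ⁻¹ B₁ + G₀ B₂)`. -/
theorem laplacian_pum_error_bound {ι : Type*} {d : ℕ}
    (J : Finset ι) (x₀ : EuclideanSpace ℝ (Fin d)) (K : ℕ) (δ : ℝ) (hδ : 0 < δ)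
    (G₀ G₁ G₂ B₀ B₁ B₂ : ℝ)
    (hG₀ : 0 ≤ G₀) (hG₁ : 0 ≤ G₁) (hG₂ : 0 ≤ G₂)
    (hB₀ : 0 ≤ B₀) (hB₁ : 0 ≤ B₁) (hB₂ : 0 ≤ B₂)
    (w e : ι → EuclideanSpace ℝ (Fin d) → ℝ)
    (hwC : ∀ j ∈ J, ContDiffAt ℝ 2 (w j) x₀)
    (heC : ∀ j ∈ J, ContDiffAt ℝ 2 (e j) x₀)
    (hK : (J.filter fun j => ¬ (∀ᶠ y in 𝓝 x₀, w j y = 0)).card ≤ K)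
    (hw0 : ∀ j ∈ J, |w j x₀| ≤ G₀)
    (hw1 : ∀ j ∈ J, ‖gradient (w j) x₀‖ ≤ G₁ / δ)
    (hw2 : ∀ j ∈ J, |laplacian (w j) x₀| ≤ G₂ / δ ^ 2)
    (he0 : ∀ j ∈ J, ¬ (∀ᶠ y in 𝓝 x₀, w j y = 0) → |e j x₀| ≤ B₀)
    (he1 : ∀ j ∈ J, ¬ (∀ᶠ y in 𝓝 x₀, w j y = 0) → ‖gradient (e j) x₀‖ ≤ B₁)
    (he2 : ∀ j ∈ J, ¬ (∀ᶠ y in 𝓝 x₀, w j y = 0) → |laplacian (e j) x₀| ≤ B₂) :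
    |laplacian (fun y => ∑ j ∈ J, w j y * e j y) x₀| ≤
      (K : ℝ) * (G₂ * (δ ^ 2)⁻¹ * B₀ + 2 * G₁ * δ⁻¹ * B₁ + G₀ * B₂) := by
  simp only [laplacian_eq_laplacian] at hw2 he2 ⊢
  rw [ContDiffAt.laplacian_sum (f := fun j y => w j y * e j y)
    fun j hj => (hwC j hj).mul (heC j hj)]
  refine (abs_sum_le_card_filter_mul ?_ ?_).trans
    (mul_le_mul_of_nonneg_right (by exact_mod_cast hK) (by positivity))
  · intro j _ hvanish
    refine laplacian_eq_zero_of_eventuallyEq_zero ?_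
    filter_upwards [not_not.1 hvanish] with y hy
    simp [hy]
  · intro j hj hw
    calc _ ≤ |Δ (w j) x₀| * |e j x₀| + 2 * (‖∇ (w j) x₀‖ * ‖∇ (e j) x₀‖) +
          |w j x₀| * |Δ (e j) x₀| := abs_laplacian_mul_le (hwC j hj) (heC j hj)
      _ ≤ G₂ / δ ^ 2 * B₀ + 2 * (G₁ / δ * B₁) + G₀ * B₂ := by
        gcongr
        exacts [hw2 j hj, he0 j hj hw, hw1 j hj, he1 j hj hw, hw0 j hj, he2 j hj hw]
      _ = _ := by ring
end

section
/- Let d ≥ 1, let Q : EuclideanSpace ℝ d ≃ₗᵢ[ℝ] EuclideanSpace ℝ d be a linear isometry equivalence, let s : Fin d → ℝ, let S : EuclideanSpace ℝ d →L[ℝ] EuclideanSpace ℝ d be the diagonal scaling (S x)ᵢ = sᵢ xᵢ, let b ∈ EuclideanSpace ℝ d, and define T(x) = S (Q x) + b. If v : EuclideanSpace ℝ d → ℝ is C² on a neighborhood of T(x), then |Δ(v ∘ T)(x)| ≤ d · (max_i sᵢ²) · max_i |D²v(T x)[eᵢ, eᵢ]|. (This is the local Laplacian error bound (edelta) in the paper.)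 -/
/-!
Write `A = S ∘ Q` and `H = D²v(T x)`. Since `T` is affine, `D²(v ∘ T)(x)[u, w] = H[A u, A w]`, so
`Δ(v ∘ T)(x)` is the diagonal sum of the bilinear form `(u, w) ↦ H[S u, S w]` over the orthonormal
basis `(Q eᵢ)ᵢ`. Such a diagonal sum is the trace of the operator representing the form, hence
does not depend on the orthonormal basis; in the standard basis it is `∑ᵢ sᵢ² H[eᵢ, eᵢ]`, and each
term is bounded by `(maxᵢ sᵢ²) · maxᵢ |H[eᵢ, eᵢ]|`.
-/

open Finset Topology

section ChainRule

variable {𝕜 E F G : Type*} [NontriviallyNormedField 𝕜]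
  [NormedAddCommGroup E] [NormedSpace 𝕜 E] [NormedAddCommGroup F] [NormedSpace 𝕜 F]
  [NormedAddCommGroup G] [NormedSpace 𝕜 G]

theorem fderiv_fderiv_comp_affine_apply {v : F → G} (A : E →L[𝕜] F) (b : F) {x : E}
    (hv : ContDiffAt 𝕜 2 v (A x + b)) (u w : E) :
    fderiv 𝕜 (fderiv 𝕜 fun y => v (A y + b)) x u w =
      fderiv 𝕜 (fderiv 𝕜 v) (A x + b) (A u) (A w) := by
  have hA : ∀ y, HasFDerivAt (fun y => A y + b) A y := fun y => A.hasFDerivAt.add_const b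
  have hfd : fderiv 𝕜 (fun y => v (A y + b)) =ᶠ[𝓝 x]
      fun y => (fderiv 𝕜 v (A y + b)).comp A := by
    filter_upwards [(hA x).continuousAt.eventually (hv.eventually (by simp))] with y hy
    exact ((hy.differentiableAt two_ne_zero).hasFDerivAt.comp y (hA y)).fderiv
  have hv' : HasFDerivAt (fderiv 𝕜 v) (fderiv 𝕜 (fderiv 𝕜 v) (A x + b)) (A x + b) :=
    ((hv.fderiv_right (m := 1) (by norm_num)).differentiableAt one_ne_zero).hasFDerivAt
  have hcomp : HasFDerivAt (fun y => (fderiv 𝕜 v (A y + b)).comp A) _ x :=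
    (hv'.comp x (hA x)).clm_comp (hasFDerivAt_const A x)
  rw [hfd.fderiv_eq, hcomp.fderiv]
  simp

end ChainRule

section Trace

variable {E : Type*} [NormedAddCommGroup E] [InnerProductSpace ℝ E]

theorem OrthonormalBasis.sum_apply_self_eq_trace [CompleteSpace E] {ι : Type*} [Fintype ι]
    (H : E →L[ℝ] E →L[ℝ] ℝ) (b : OrthonormalBasis ι ℝ E) :
    ∑ i, H (b i) (b i) = LinearMap.trace ℝ E
      (InnerProductSpace.continuousLinearMapOfBilin H : E →L[ℝ] E).toLinearMap := by
  rw [LinearMap.trace_eq_sum_inner _ b]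
  refine sum_congr rfl fun i _ => ?_
  rw [real_inner_comm, ContinuousLinearMap.coe_coe,
    InnerProductSpace.continuousLinearMapOfBilin_apply]

theorem OrthonormalBasis.sum_apply_self_eq {ι ι' : Type*} [Fintype ι] [Fintype ι']
    (H : E →L[ℝ] E →L[ℝ] ℝ) (b : OrthonormalBasis ι ℝ E) (b' : OrthonormalBasis ι' ℝ E) :
    ∑ i, H (b i) (b i) = ∑ j, H (b' j) (b' j) := by
  have := b.toBasis.finiteDimensional_of_finite
  have := FiniteDimensional.complete ℝ E
  rw [b.sum_apply_self_eq_trace, b'.sum_apply_self_eq_trace]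

end Trace

theorem EuclideanSpace.apply_single_one_of_diagonal {ι : Type*} [Fintype ι] [DecidableEq ι]
    {s : ι → ℝ} {S : EuclideanSpace ℝ ι →L[ℝ] EuclideanSpace ℝ ι}
    (hS : ∀ x i, S x i = s i * x i) (i : ι) :
    S (EuclideanSpace.single i 1) = s i • EuclideanSpace.single i 1 := by
  ext j
  by_cases h : j = i <;> simp [hS, h]

theorem abs_sum_mul_le_card_mul_iSup_abs_mul_iSup_abs {ι : Type*} [Fintype ι] (a c : ι → ℝ) :
    |∑ i, a i * c i| ≤ Fintype.card ι * (⨆ i, |a i|) * ⨆ i, |c i| := by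
  have hbdd : ∀ f : ι → ℝ, BddAbove (Set.range f) := fun f => (Set.finite_range f).bddAbove
  calc |∑ i, a i * c i| ≤ ∑ i, |a i| * |c i| := by
        simpa only [abs_mul] using abs_sum_le_sum_abs (fun i => a i * c i) univ
    _ ≤ ∑ _i : ι, (⨆ i, |a i|) * ⨆ i, |c i| := by
        gcongr with i
        · exact (abs_nonneg _).trans (le_ciSup (hbdd fun i => |a i|) i)
        · exact le_ciSup (hbdd fun i => |a i|) i
        · exact le_ciSup (hbdd fun i => |c i|) i
    _ = Fintype.card ι * (⨆ i, |a i|) * ⨆ i, |c i| := by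
        rw [sum_const, card_univ, nsmul_eq_mul, mul_assoc]

theorem abs_laplacian_comp_scaled_isometry_le_general (d : ℕ)
    (Q : EuclideanSpace ℝ (Fin d) ≃ₗᵢ[ℝ] EuclideanSpace ℝ (Fin d))
    (s : Fin d → ℝ)
    (S : EuclideanSpace ℝ (Fin d) →L[ℝ] EuclideanSpace ℝ (Fin d))
    (hS : ∀ x : EuclideanSpace ℝ (Fin d), ∀ i : Fin d, S x i = s i * x i)
    (b : EuclideanSpace ℝ (Fin d))
    (T : EuclideanSpace ℝ (Fin d) → EuclideanSpace ℝ (Fin d))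
    (hT : ∀ x, T x = S (Q x) + b)
    (v : EuclideanSpace ℝ (Fin d) → ℝ)
    (x : EuclideanSpace ℝ (Fin d))
    (hv : ContDiffAt ℝ 2 v (T x)) :
    |laplacian (v ∘ T) x| ≤
      (d : ℝ) * (⨆ i : Fin d, s i ^ 2) *
        ⨆ i : Fin d,
          |fderiv ℝ (fderiv ℝ v) (T x) (EuclideanSpace.single i 1)
            (EuclideanSpace.single i 1)| := by
  set e := EuclideanSpace.basisFun (Fin d) ℝ
  set A := S.comp Q.toLinearIsometry.toContinuousLinearMap
  set H := fderiv ℝ (fderiv ℝ v) (T x)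
  have hvT : v ∘ T = fun y => v (A y + b) := funext fun y => by simp [A, hT]
  have hTx : T x = A x + b := hT x
  have hlap : laplacian (v ∘ T) x = ∑ i, s i ^ 2 * H (e i) (e i) :=
    calc laplacian (v ∘ T) x = ∑ i, H (A (e i)) (A (e i)) := by
          simp only [laplacian, hvT, fderiv_fderiv_comp_affine_apply A b (hTx ▸ hv), ← hTx, e,
            EuclideanSpace.basisFun_apply, H]
      _ = ∑ i, H.bilinearComp S S (e.map Q i) (e.map Q i) := by simp [A]
      _ = ∑ i, H.bilinearComp S S (e i) (e i) := (e.map Q).sum_apply_self_eq _ e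
      _ = ∑ i, s i ^ 2 * H (e i) (e i) := by
          refine sum_congr rfl fun i _ => ?_
          simp only [ContinuousLinearMap.bilinearComp_apply, e, EuclideanSpace.basisFun_apply,
            EuclideanSpace.apply_single_one_of_diagonal hS, map_smul,
            smul_apply, smul_eq_mul]
          ring
  have hbound :=
    abs_sum_mul_le_card_mul_iSup_abs_mul_iSup_abs (fun i => s i ^ 2) fun i => H (e i) (e i)
  simp only [abs_sq, Fintype.card_fin] at hbound
  simpa only [hlap, e, EuclideanSpace.basisFun_apply] using hbound

/-- Local Laplacian error bound: for `T x = S (Q x) + b` with `Q` a rotation and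
`S` the diagonal scaling with entries `s i`,
`|Δ(v ∘ T)(x)| ≤ d (max_i s i²) max_i |D²v(T x)[eᵢ, eᵢ]|`. -/
theorem abs_laplacian_comp_scaled_isometry_le (d : ℕ) (hd : 1 ≤ d)
    (Q : EuclideanSpace ℝ (Fin d) ≃ₗᵢ[ℝ] EuclideanSpace ℝ (Fin d))
    (s : Fin d → ℝ)
    (S : EuclideanSpace ℝ (Fin d) →L[ℝ] EuclideanSpace ℝ (Fin d))
    (hS : ∀ x : EuclideanSpace ℝ (Fin d), ∀ i : Fin d, S x i = s i * x i)
    (b : EuclideanSpace ℝ (Fin d))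
    (T : EuclideanSpace ℝ (Fin d) → EuclideanSpace ℝ (Fin d))
    (hT : ∀ x, T x = S (Q x) + b)
    (v : EuclideanSpace ℝ (Fin d) → ℝ)
    (x : EuclideanSpace ℝ (Fin d))
    (hv : ContDiffAt ℝ 2 v (T x)) :
    |laplacian (v ∘ T) x| ≤
      (d : ℝ) * (⨆ i : Fin d, s i ^ 2) *
        ⨆ i : Fin d,
          |fderiv ℝ (fderiv ℝ v) (T x) (EuclideanSpace.single i 1)
            (EuclideanSpace.single i 1)| :=
  abs_laplacian_comp_scaled_isometry_le_general d Q s S hS b T hT v x hv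
end
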